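/- Let S ⊆ BS(1,2) be finite with S = U ∪ V, U = bᵐ·a^M ≠ ∅ and V = bⁿ·a^N ≠ ∅, where 0 ≤ m < n are integers and M, N ⊆ ℤ are finite. Then 2·|S²| ≥ 7·|S| − 8. -/

import Mathlib

open Pointwise

def BSRel (n : ℤ) : Set (FreeGroup Bool) :=
  {FreeGroup.of true * FreeGroup.of false * (FreeGroup.of false * FreeGroup.of true ^ n)⁻¹}

/-- The Baumslag–Solitar group `BS(1,n) = ⟨a, b ∣ a b = b aⁿ⟩`. -/
abbrev BS (n : ℤ) : Type := PresentedGroup (BSRel n)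

noncomputable instance (n : ℤ) : DecidableEq (BS n) := Classical.decEq _

/-- The generator `a` of `BS(1,n)`. -/
def bsa (n : ℤ) : BS n := PresentedGroup.of true

/-- The generator `b` of `BS(1,n)`. -/
def bsb (n : ℤ) : BS n := PresentedGroup.of false

/-!
Elements `bʲaˣ` of `BS(1,k)` are determined by `(j, x)` (look at the affine action of `BS(1,k)` on
`ℚ`), and `bⁱaˣ · bʲaʸ = bⁱ⁺ʲ a^(kʲx + y)`. Hence with `p = 2ᵐ`, `q = 2ⁿ` the set `S²` is the
disjoint union of three cosets of `⟨a⟩` carrying `pM + M`, `qM + N ∪ pN + M` and `qN + N`, and the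
claim becomes a sumset inequality in `ℤ`. For `c ≥ 2` one has `|cX + X| ≥ 3|X| - 2`, which settles
the case `m > 0`. When `m = 0`, every `x ∈ M` with `qx ∉ [min M, max M]` gives an element of
`qM + N` outside `N + M`, while the `x` with `qx ∈ [min M, max M]` span at most half the diameter of
`M`, which makes `M + M` large; averaging the two bounds gives the result.
-/

open Finset

section LinearOrder

variable {α : Type*} [LinearOrder α]

lemma card_le_card_filter_lt_add_card_filter_gt_add_one (M : Finset α) (c : α) :
    #M ≤ #{x ∈ M | x < c} + #{x ∈ M | c < x} + 1 :=
  calc #M ≤ #({x ∈ M | x < c} ∪ {x ∈ M | c < x} ∪ {c}) := card_le_card fun x hx => by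
        simp only [mem_union, mem_filter, mem_singleton, hx, true_and]
        have := lt_trichotomy x c
        tauto
    _ ≤ _ := (card_union_le _ _).trans (by rw [card_singleton]; gcongr; exact card_union_le _ _)

lemma card_add_card_add_card_le_of_separated {A B C T : Finset α} {l r : α} (hlr : l ≤ r)
    (hA : ∀ z ∈ A, z < l) (hB : ∀ z ∈ B, l ≤ z ∧ z ≤ r) (hC : ∀ z ∈ C, r < z)
    (hT : A ∪ B ∪ C ⊆ T) : #A + #B + #C ≤ #T := by
  have hAB : Disjoint A B := disjoint_left.2 fun z hzA hzB => (hA z hzA).not_ge (hB z hzB).1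
  have hABC : Disjoint (A ∪ B) C := disjoint_left.2 fun z hz hzC => by
    rcases mem_union.1 hz with hzA | hzB
    · exact (hA z hzA).not_ge (hlr.trans (hC z hzC).le)
    · exact (hC z hzC).not_ge (hB z hzB).2
  rw [← card_union_of_disjoint hAB, ← card_union_of_disjoint hABC]
  exact card_le_card hT

end LinearOrder

section SumsetsOfIntegers

variable {M N P X Y : Finset ℤ}

lemma card_add_card_le_card_image_mul_add {c : ℤ} (hc : c ≠ 0) (hX : X.Nonempty)
    (hY : Y.Nonempty) : #X + #Y ≤ #(X.image (c * ·) + Y) + 1 := by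
  have := cauchy_davenport_add_of_linearOrder_isCancelAdd (hX.image (c * ·)) hY
  rw [card_image_of_injective X (mul_right_injective₀ hc)] at this
  have := hX.card_pos
  omega

lemma three_mul_card_le_card_image_mul_add_self {c : ℤ} (hc : 2 ≤ c) (X : Finset ℤ) :
    3 * #X ≤ #(X.image (c * ·) + X) + 2 := by
  induction X using Finset.induction_on_max with
  | empty => simp
  | insert a s has ih =>
    rcases s.eq_empty_or_nonempty with rfl | hs
    · simp
    obtain ⟨b, hbs, hsb⟩ : ∃ b ∈ s, ∀ x ∈ s, x ≤ b := ⟨s.max' hs, s.max'_mem hs, s.le_max'⟩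
    have hba : b < a := has b hbs
    have hle : ∀ z ∈ s.image (c * ·) + s, z ≤ c * b + b := by
      simp only [mem_add, mem_image]
      rintro _ ⟨_, ⟨x, hx, rfl⟩, y, hy, rfl⟩
      have := mul_le_mul_of_nonneg_left (hsb x hx) (by omega : 0 ≤ c)
      have := hsb y hy
      omega
    -- `c * b + a < c * a + b` is `(c - 1) * (a - b) > 0`, which is where `2 ≤ c` enters.
    have hnew : c * b + b < c * b + a ∧ c * b + a < c * a + b ∧ c * a + b < c * a + a :=
      ⟨by omega, by nlinarith, by omega⟩
    have hsub : (s.image (c * ·) + s) ∪ {c * b + a, c * a + b, c * a + a} ⊆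
        (insert a s).image (c * ·) + insert a s := by
      have ha : a ∈ insert a s := mem_insert_self a s
      have hb : b ∈ insert a s := mem_insert_of_mem hbs
      refine union_subset (add_subset_add (image_subset_image (subset_insert a s))
        (subset_insert a s)) ?_
      simp only [insert_subset_iff, singleton_subset_iff]
      exact ⟨add_mem_add (mem_image_of_mem _ hb) ha, add_mem_add (mem_image_of_mem _ ha) hb,
        add_mem_add (mem_image_of_mem _ ha) ha⟩
    have hdisj : Disjoint (s.image (c * ·) + s) {c * b + a, c * a + b, c * a + a} := by
      simp only [disjoint_left, mem_insert, mem_singleton]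
      intro z hz
      have := hle z hz
      omega
    have hthree : #({c * b + a, c * a + b, c * a + a} : Finset ℤ) = 3 := by
      rw [card_insert_of_notMem (by simp only [mem_insert, mem_singleton]; omega),
        card_pair (by omega)]
    have := card_le_card hsub
    rw [card_union_of_disjoint hdisj, hthree] at this
    rw [card_insert_of_notMem fun h => (has a h).false]
    omega

lemma two_mul_card_le_card_image_add_union_image_add {μ ν : ℤ} (hP : P ⊆ Icc μ ν) :
    2 * #P ≤ #(P.image (μ + ·) ∪ P.image (· + ν)) + 1 := by
  have hinter : P.image (μ + ·) ∩ P.image (· + ν) ⊆ {μ + ν} := by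
    intro z hz
    simp only [mem_inter, mem_image] at hz
    obtain ⟨⟨x, hx, rfl⟩, y, hy, hxy⟩ := hz
    have := mem_Icc.1 (hP hx)
    have := mem_Icc.1 (hP hy)
    rw [mem_singleton]
    omega
  have := card_union_add_card_inter (P.image (μ + ·)) (P.image (· + ν))
  rw [card_image_of_injective P (add_right_injective μ),
    card_image_of_injective P (add_left_injective ν)] at this
  have := card_le_card hinter
  rw [card_singleton] at this
  omega

lemma card_add_two_mul_card_le_card_add_self {s t : ℤ} (hs : s ∈ M) (ht : t ∈ M) (hPM : P ⊆ M)
    (hP : ∀ x ∈ P, ∀ y ∈ P, 2 * (y - x) ≤ t - s) : #M + 2 * #P ≤ #(M + M) + 2 := by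
  rcases P.eq_empty_or_nonempty with rfl | hPne
  · have : #M ≤ #(M + M) := card_le_card_add_right ⟨s, hs⟩
    simp only [card_empty]
    omega
  obtain ⟨μ, hμ, ν, hν, hPμν⟩ : ∃ μ ∈ P, ∃ ν ∈ P, P ⊆ Icc μ ν :=
    ⟨P.min' hPne, P.min'_mem hPne, P.max' hPne, P.max'_mem hPne,
      fun x hx => mem_Icc.2 ⟨P.min'_le x hx, P.le_max' x hx⟩⟩
  have hμν := hP μ hμ ν hν
  have hμ_le_ν := (mem_Icc.1 (hPμν hμ)).2
  -- `s + x` for `x < 2μ - s`, then `μ + P ∪ P + ν`, then `x + t` for `x > 2μ - s`: the three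
  -- blocks are separated by `2μ` and `2ν`, and only `x = 2μ - s` is lost from `M`.
  have hblocks := card_add_card_add_card_le_of_separated (T := M + M) (l := 2 * μ) (r := 2 * ν)
    (A := {x ∈ M | x < 2 * μ - s}.image (s + ·)) (B := P.image (μ + ·) ∪ P.image (· + ν))
    (C := {x ∈ M | 2 * μ - s < x}.image (· + t)) (by omega)
    (by simp only [mem_image, mem_filter]; rintro _ ⟨x, ⟨-, hx⟩, rfl⟩; omega)
    (by
      simp only [mem_union, mem_image]
      rintro _ (⟨x, hx, rfl⟩ | ⟨x, hx, rfl⟩) <;> have := mem_Icc.1 (hPμν hx) <;> omega)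
    (by simp only [mem_image, mem_filter]; rintro _ ⟨x, ⟨-, hx⟩, rfl⟩; omega)
    (by
      simp only [union_subset_iff, image_subset_iff, mem_filter]
      exact ⟨⟨fun x hx => add_mem_add hs hx.1, fun x hx => add_mem_add (hPM hμ) (hPM hx),
        fun x hx => add_mem_add (hPM hx) (hPM hν)⟩, fun x hx => add_mem_add hx.1 ht⟩)
  rw [card_image_of_injective _ (add_right_injective s),
    card_image_of_injective _ (add_left_injective t)] at hblocks
  have := card_le_card_filter_lt_add_card_filter_gt_add_one M (2 * μ - s)
  have := two_mul_card_le_card_image_add_union_image_add hPμν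
  omega

lemma card_add_card_add_card_filter_add_card_filter_le {q s t : ℤ} (hq : q ≠ 0) (hM : M.Nonempty)
    (hN : N.Nonempty) (hMst : ∀ x ∈ M, s ≤ x ∧ x ≤ t) :
    #M + #N + #{x ∈ M | t < q * x} + #{x ∈ M | q * x < s} ≤
      #(M.image (q * ·) + N ∪ (N + M)) + 1 := by
  obtain ⟨u, hu, hNu⟩ : ∃ u ∈ N, ∀ y ∈ N, u ≤ y := ⟨N.min' hN, N.min'_mem hN, N.min'_le⟩
  obtain ⟨v, hv, hNv⟩ : ∃ v ∈ N, ∀ y ∈ N, y ≤ v := ⟨N.max' hN, N.max'_mem hN, N.le_max'⟩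
  obtain ⟨x₀, hx₀⟩ := hM
  have hinj (w : ℤ) : Function.Injective (q * · + w) := fun x y h =>
    mul_left_cancel₀ hq (add_right_cancel h)
  have hblocks := card_add_card_add_card_le_of_separated (T := M.image (q * ·) + N ∪ (N + M))
    (l := u + s) (r := v + t) (A := {x ∈ M | q * x < s}.image (q * · + u)) (B := N + M)
    (C := {x ∈ M | t < q * x}.image (q * · + v))
    (by have := hMst x₀ hx₀; have := hNu v hv; omega)
    (by simp only [mem_image, mem_filter]; rintro _ ⟨x, ⟨-, hx⟩, rfl⟩; omega)
    (by
      simp only [mem_add]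
      rintro _ ⟨y, hy, x, hx, rfl⟩
      have := hMst x hx; have := hNu y hy; have := hNv y hy
      omega)
    (by simp only [mem_image, mem_filter]; rintro _ ⟨x, ⟨-, hx⟩, rfl⟩; omega)
    (by
      simp only [union_subset_iff, image_subset_iff, mem_filter]
      exact ⟨⟨fun x hx => mem_union_left _ (add_mem_add (mem_image_of_mem _ hx.1) hu),
        subset_union_right⟩,
        fun x hx => mem_union_left _ (add_mem_add (mem_image_of_mem _ hx.1) hv)⟩)
  rw [card_image_of_injective _ (hinj u), card_image_of_injective _ (hinj v)] at hblocks
  have := cauchy_davenport_add_of_linearOrder_isCancelAdd hN ⟨x₀, hx₀⟩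
  omega

lemma seven_mul_card_add_card_le_of_one {q : ℤ} (hq : 2 ≤ q) (hM : M.Nonempty) (hN : N.Nonempty) :
    7 * (#M + #N) ≤
      2 * (#(M + M) + #(M.image (q * ·) + N ∪ (N + M)) + #(N.image (q * ·) + N)) + 8 := by
  set s := M.min' hM
  set t := M.max' hM
  have hMst : ∀ x ∈ M, s ≤ x ∧ x ≤ t := fun x hx => ⟨M.min'_le x hx, M.le_max' x hx⟩
  set W := {x ∈ M | s ≤ q * x ∧ q * x ≤ t}
  have hcover : #M ≤ #{x ∈ M | t < q * x} + #{x ∈ M | q * x < s} + #W := by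
    calc #M ≤ #({x ∈ M | t < q * x} ∪ {x ∈ M | q * x < s} ∪ W) := card_le_card fun x hx => by
          simp only [W, mem_union, mem_filter, hx, true_and]; omega
      _ ≤ _ := (card_union_le _ _).trans (by gcongr; exact card_union_le _ _)
  have hW : #M + 2 * #W ≤ #(M + M) + 2 := by
    refine card_add_two_mul_card_le_card_add_self (M.min'_mem hM) (M.max'_mem hM)
      (filter_subset _ _) fun x hx y hy => ?_
    simp only [W, mem_filter] at hx hy
    rcases le_total x y with hxy | hxy <;> nlinarith
  have hout := card_add_card_add_card_filter_add_card_filter_le (by omega : q ≠ 0) hM hN hMst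
  have hMM := cauchy_davenport_add_of_linearOrder_isCancelAdd hM hM
  have hNN := three_mul_card_le_card_image_mul_add_self hq N
  have := hM.card_pos
  omega

lemma seven_mul_card_add_card_le {p q : ℤ} (hp : 1 ≤ p) (hq : 2 ≤ q) (hM : M.Nonempty)
    (hN : N.Nonempty) :
    7 * (#M + #N) ≤ 2 * (#(M.image (p * ·) + M) + #(M.image (q * ·) + N ∪ (N.image (p * ·) + M)) +
      #(N.image (q * ·) + N)) + 8 := by
  rcases hp.eq_or_lt with rfl | hp
  · simpa only [one_mul, image_id'] using seven_mul_card_add_card_le_of_one hq hM hN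
  have hMM := three_mul_card_le_card_image_mul_add_self (by omega : 2 ≤ p) M
  have hNN := three_mul_card_le_card_image_mul_add_self hq N
  have hNM := card_add_card_le_card_image_mul_add (by omega : p ≠ 0) hN hM
  have := card_le_card (subset_union_right (s₁ := M.image (q * ·) + N) (s₂ := N.image (p * ·) + M))
  have := hM.card_pos
  have := hN.card_pos
  omega

end SumsetsOfIntegers

section BaumslagSolitar

variable {k : ℤ}

lemma bsa_mul_bsb (k : ℤ) : bsa k * bsb k = bsb k * bsa k ^ k := by
  have h : (QuotientGroup.mk (FreeGroup.of true * FreeGroup.of false *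
      (FreeGroup.of false * FreeGroup.of true ^ k)⁻¹) : BS k) = 1 :=
    (QuotientGroup.eq_one_iff _).2 (Subgroup.subset_normalClosure rfl)
  rwa [QuotientGroup.mk_mul, QuotientGroup.mk_inv, QuotientGroup.mk_mul, QuotientGroup.mk_mul,
    QuotientGroup.mk_zpow, mul_inv_eq_one] at h

lemma bsa_zpow_mul_bsb (k x : ℤ) : bsa k ^ x * bsb k = bsb k * bsa k ^ (k * x) := by
  have hconj : bsb k * bsa k ^ k * (bsb k)⁻¹ = bsa k := by
    rw [← bsa_mul_bsb]; group
  conv_lhs => rw [← hconj, conj_zpow, ← zpow_mul]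
  group

lemma bsa_zpow_mul_bsb_pow (k x : ℤ) (j : ℕ) :
    bsa k ^ x * bsb k ^ j = bsb k ^ j * bsa k ^ (k ^ j * x) := by
  induction j generalizing x with
  | zero => simp
  | succ j ih =>
    rw [pow_succ', ← mul_assoc, bsa_zpow_mul_bsb, mul_assoc, ih, ← mul_assoc, ← pow_succ']
    congr 2
    ring

def bsba (k : ℤ) (j : ℕ) (x : ℤ) : BS k := bsb k ^ j * bsa k ^ x

lemma bsba_mul_bsba (k : ℤ) (i j : ℕ) (x y : ℤ) :
    bsba k i x * bsba k j y = bsba k (i + j) (k ^ j * x + y) := by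
  simp only [bsba]
  rw [mul_assoc, ← mul_assoc (bsa k ^ x), bsa_zpow_mul_bsb_pow, mul_assoc, ← zpow_add,
    ← mul_assoc, ← pow_add]

def affineAction (hk : k ≠ 0) : BS k →* Equiv.Perm ℚ :=
  PresentedGroup.toGroup (f := fun g : Bool => if g then Equiv.addRight 1 else
    Equiv.mulLeft₀ (k⁻¹ : ℚ) (by simpa using hk)) (by
      rintro r rfl
      rw [map_mul, map_inv, mul_inv_eq_one]
      ext t
      simp [mul_add, hk])

lemma affineAction_bsa (hk : k ≠ 0) (x : ℤ) (t : ℚ) : affineAction hk (bsa k ^ x) t = t + x := by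
  rw [map_zpow, affineAction, bsa, PresentedGroup.toGroup.of, if_pos rfl]
  induction x using Int.induction_on generalizing t with
  | zero => simp
  | succ x ih =>
    rw [zpow_add_one, Equiv.Perm.mul_apply, ih, Equiv.coe_addRight]
    push_cast
    ring
  | pred x ih =>
    rw [zpow_sub_one, Equiv.Perm.mul_apply, ih, Equiv.Perm.inv_def, Equiv.addRight_symm,
      Equiv.coe_addRight]
    push_cast
    ring

lemma affineAction_bsb (hk : k ≠ 0) (j : ℕ) (t : ℚ) :
    affineAction hk (bsb k ^ j) t = t / k ^ j := by
  rw [map_pow, affineAction, bsb, PresentedGroup.toGroup.of, if_neg Bool.false_ne_true]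
  induction j generalizing t with
  | zero => simp
  | succ j ih => rw [pow_succ, Equiv.Perm.mul_apply, ih, Equiv.mulLeft₀_apply]; ring

lemma affineAction_bsba (hk : k ≠ 0) (j : ℕ) (x : ℤ) (t : ℚ) :
    affineAction hk (bsba k j x) t = (t + x) / k ^ j := by
  rw [bsba, map_mul, Equiv.Perm.mul_apply, affineAction_bsa, affineAction_bsb]

lemma bsba_injective (hk : k ≠ 0) (j : ℕ) : Function.Injective (bsba k j) := by
  intro x y h
  have h0 := congrArg (fun g => affineAction hk g 0) h
  simp only [affineAction_bsba, zero_add] at h0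
  exact_mod_cast (div_left_inj' (pow_ne_zero j (Int.cast_ne_zero.2 hk))).1 h0

lemma bsba_inj (hk : 1 < k.natAbs) {i j : ℕ} {x y : ℤ} :
    bsba k i x = bsba k j y ↔ i = j ∧ x = y := by
  refine ⟨fun h => ?_, by rintro ⟨rfl, rfl⟩; rfl⟩
  have hk0 : k ≠ 0 := by omega
  have hij : i = j := by
    have h0 := congrArg (fun g => affineAction hk0 g 0) h
    have h1 := congrArg (fun g => affineAction hk0 g 1) h
    simp only [affineAction_bsba] at h0 h1
    have : ((k ^ i : ℤ) : ℚ)⁻¹ = ((k ^ j : ℤ) : ℚ)⁻¹ := by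
      push_cast; linear_combination h1 - h0
    exact Int.pow_right_injective hk (by exact_mod_cast inv_injective this)
  subst hij
  exact ⟨rfl, bsba_injective hk0 i h⟩

lemma image_bsba_mul_image_bsba (k : ℤ) (i j : ℕ) (X Y : Finset ℤ) :
    X.image (bsba k i) * Y.image (bsba k j) = (X.image (k ^ j * ·) + Y).image (bsba k (i + j)) := by
  ext g
  simp only [mem_mul, mem_image, mem_add]
  constructor
  · rintro ⟨_, ⟨x, hx, rfl⟩, _, ⟨y, hy, rfl⟩, rfl⟩
    exact ⟨_, ⟨_, ⟨x, hx, rfl⟩, y, hy, rfl⟩, (bsba_mul_bsba k i j x y).symm⟩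
  · rintro ⟨_, ⟨_, ⟨x, hx, rfl⟩, y, hy, rfl⟩, rfl⟩
    exact ⟨_, ⟨x, hx, rfl⟩, _, ⟨y, hy, rfl⟩, bsba_mul_bsba k i j x y⟩

lemma card_image_bsba (hk : k ≠ 0) (j : ℕ) (X : Finset ℤ) : #(X.image (bsba k j)) = #X :=
  card_image_of_injective X (bsba_injective hk j)

lemma disjoint_image_bsba (hk : 1 < k.natAbs) {i j : ℕ} (hij : i ≠ j) (X Y : Finset ℤ) :
    Disjoint (X.image (bsba k i)) (Y.image (bsba k j)) := by
  simp only [disjoint_left, mem_image]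
  rintro _ ⟨x, -, rfl⟩ ⟨y, -, h⟩
  exact hij ((bsba_inj hk).1 h.symm).1

lemma card_image_bsba_union_image_bsba (hk : 1 < k.natAbs) {i j : ℕ} (hij : i ≠ j)
    (X Y : Finset ℤ) : #(X.image (bsba k i) ∪ Y.image (bsba k j)) = #X + #Y := by
  have hk0 : k ≠ 0 := by omega
  rw [card_union_of_disjoint (disjoint_image_bsba hk hij X Y), card_image_bsba hk0,
    card_image_bsba hk0]

lemma card_sq_image_bsba_union_image_bsba (hk : 1 < k.natAbs) {i j : ℕ} (hij : i < j)
    (X Y : Finset ℤ) :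
    #((X.image (bsba k i) ∪ Y.image (bsba k j)) * (X.image (bsba k i) ∪ Y.image (bsba k j))) =
      #(X.image (k ^ i * ·) + X) + #(X.image (k ^ j * ·) + Y ∪ (Y.image (k ^ i * ·) + X)) +
        #(Y.image (k ^ j * ·) + Y) := by
  have hk0 : k ≠ 0 := by omega
  rw [union_mul, mul_union, mul_union, image_bsba_mul_image_bsba, image_bsba_mul_image_bsba,
    image_bsba_mul_image_bsba, image_bsba_mul_image_bsba, Nat.add_comm j i, union_assoc,
    ← union_assoc (image (bsba k (i + j)) _), ← image_union,
    card_union_of_disjoint (disjoint_union_right.2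
      ⟨disjoint_image_bsba hk (by omega) _ _, disjoint_image_bsba hk (by omega) _ _⟩),
    card_union_of_disjoint (disjoint_image_bsba hk (by omega) _ _),
    card_image_bsba hk0, card_image_bsba hk0, card_image_bsba hk0, add_assoc]

end BaumslagSolitar

theorem stmt14 (m n : ℕ) (hmn : m < n) (M N : Finset ℤ)
    (hM : M.Nonempty) (hN : N.Nonempty) (S U V : Finset (BS 2))
    (hU : U = M.image (fun x => bsb 2 ^ m * bsa 2 ^ x))
    (hV : V = N.image (fun x => bsb 2 ^ n * bsa 2 ^ x))
    (hS : S = U ∪ V) :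
    7 * (S.card : ℤ) - 8 ≤ 2 * ((S * S).card : ℤ) := by
  obtain rfl : U = M.image (bsba 2 m) := hU
  obtain rfl : V = N.image (bsba 2 n) := hV
  subst hS
  have h2 : 1 < (2 : ℤ).natAbs := by decide
  rw [card_sq_image_bsba_union_image_bsba h2 hmn, card_image_bsba_union_image_bsba h2 hmn.ne]
  have := seven_mul_card_add_card_le (one_le_pow₀ (n := m) one_le_two)
    (le_self_pow₀ one_le_two (by omega : n ≠ 0)) hM hN
  push_cast
  omega
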